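/- arXiv:1403.8027 — 2 statements merged into one kernel-verified Lean document; each statement's English description precedes it below -/
import Mathlib

section
/- Let G be a (P5, P5-bar)-free graph. Then every induced 5-cycle of G is contained in a buoy of G which is either full (contains all vertices of G) or whose vertex set is a module of G. -/
open SimpleGraph

/-- A graph is `k`-critical if its chromatic number equals `k` and every proper
induced subgraph is `(k-1)`-colorable. -/
def IsKCritical {V : Type*} (G : SimpleGraph V) (k : ℕ) : Prop :=
  G.chromaticNumber = k ∧ ∀ s : Set V, s ≠ Set.univ → (G.induce s).Colorable (k - 1)

/-- A set `X` of vertices is a module if every vertex outside `X` is adjacent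
either to all vertices of `X` or to none of them. -/
def IsModule {V : Type*} (G : SimpleGraph V) (X : Set V) : Prop :=
  ∀ v ∉ X, (∀ x ∈ X, G.Adj v x) ∨ (∀ x ∈ X, ¬ G.Adj v x)

/-- `G` contains no induced subgraph isomorphic to `H`. -/
def InducedFree {V W : Type*} (G : SimpleGraph V) (H : SimpleGraph W) : Prop :=
  ¬ ∃ s : Set V, Nonempty ((G.induce s) ≃g H)

/-- `G` is (P5, P5-bar)-free. -/
def P5P5barFree {V : Type*} (G : SimpleGraph V) : Prop :=
  InducedFree G (pathGraph 5) ∧ InducedFree G (pathGraph 5)ᶜ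

/-- A buoy in `G` given by its five non-empty bags. -/
structure IsBuoy {V : Type*} (G : SimpleGraph V) (B : Fin 5 → Set V) : Prop where
  nonempty : ∀ i, (B i).Nonempty
  disjoint : ∀ i j, i ≠ j → Disjoint (B i) (B j)
  adj_next : ∀ i, ∀ x ∈ B i, ∀ y ∈ B (i + 1), G.Adj x y
  not_adj_skip : ∀ i, ∀ x ∈ B i, ∀ y ∈ B (i + 2), ¬ G.Adj x y

/-- `G` is a pseudo-buoy with (possibly empty) bags `B 0, …, B 4` partitioning
its vertex set. -/
structure IsPseudoBuoy {V : Type*} (G : SimpleGraph V) (B : Fin 5 → Set V) : Prop where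
  cover : (⋃ i, B i) = Set.univ
  disjoint : ∀ i j, i ≠ j → Disjoint (B i) (B j)
  adj_next : ∀ i, ∀ x ∈ B i, ∀ y ∈ B (i + 1), G.Adj x y
  not_adj_skip : ∀ i, ∀ x ∈ B i, ∀ y ∈ B (i + 2), ¬ G.Adj x y

/-- The graph obtained from `G` by substituting `H` for the module `M`. -/
def substitute {V W : Type*} (G : SimpleGraph V) (M : Set V) (H : SimpleGraph W) :
    SimpleGraph ({v : V // v ∉ M} ⊕ W) where
  Adj x y :=
    match x, y with
    | Sum.inl a, Sum.inl b => G.Adj a b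
    | Sum.inl a, Sum.inr _ => ∃ m ∈ M, G.Adj a m
    | Sum.inr _, Sum.inl b => ∃ m ∈ M, G.Adj b m
    | Sum.inr a, Sum.inr b => H.Adj a b
  symm := ⟨by
    rintro (a | a) (b | b) h
    · exact G.adj_symm h
    · exact h
    · exact h
    · exact H.adj_symm h⟩
  loopless := ⟨by
    rintro (a | a) h
    · exact G.irrefl h
    · exact H.irrefl h⟩

/-- The join of two graphs. -/
def joinGraph {V W : Type*} (G : SimpleGraph V) (H : SimpleGraph W) :
    SimpleGraph (V ⊕ W) where
  Adj x y :=
    match x, y with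
    | Sum.inl a, Sum.inl b => G.Adj a b
    | Sum.inl _, Sum.inr _ => True
    | Sum.inr _, Sum.inl _ => True
    | Sum.inr a, Sum.inr b => H.Adj a b
  symm := ⟨by
    rintro (a | a) (b | b) h
    · exact G.adj_symm h
    · trivial
    · trivial
    · exact H.adj_symm h⟩
  loopless := ⟨by
    rintro (a | a) h
    · exact G.irrefl h
    · exact H.irrefl h⟩


/-! Take a buoy containing the given `C5` with as many vertices as possible. Every transversal
of a buoy is an induced `C5`, and a vertex `v` outside it sees on such a cycle nothing,
everything, or exactly what some cycle vertex `a` sees apart from `a` itself: any other trace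
yields an induced `P5` or an induced house. If `v` had a neighbour and a non-neighbour in the
buoy, moving one vertex of a transversal at a time would show that the same `a` works for all
transversals, so `v` could join the bag of `a`, against maximality. Hence the buoy is a module. -/

open Finset

theorem Set.mem_update_insert_iff {ι α : Type*} [DecidableEq ι] {B : ι → Set α} {a i : ι}
    {v x : α} : x ∈ Function.update B a (insert v (B a)) i ↔ x ∈ B i ∨ i = a ∧ x = v := by
  rcases eq_or_ne i a with rfl | h <;> simp [*, or_comm]

theorem Set.iUnion_update_insert {ι α : Type*} [DecidableEq ι] (B : ι → Set α) (a : ι)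
    (v : α) : ⋃ i, Function.update B a (insert v (B a)) i = insert v (⋃ i, B i) := by
  ext x
  simp [Set.mem_update_insert_iff, exists_or, or_comm]

theorem inducedFree_iff_not_isIndContained {V W : Type*} {G : SimpleGraph V}
    {H : SimpleGraph W} : InducedFree G H ↔ ¬ H ⊴ G := by
  rw [isIndContained_iff_exists_iso_induce]
  exact not_congr <| exists_congr fun _ => ⟨fun ⟨e⟩ => ⟨e.symm⟩, fun ⟨e⟩ => ⟨e.symm⟩⟩

namespace SimpleGraph

def cycleGraph.rotate {n : ℕ} [NeZero n] (k : Fin n) : cycleGraph n ≃g cycleGraph n :=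
  { Equiv.addLeft k with map_rel_iff' := by simp [cycleGraph_adj'] }

@[simp]
theorem cycleGraph.rotate_apply {n : ℕ} [NeZero n] (k i : Fin n) :
    cycleGraph.rotate k i = k + i := rfl

theorem cycleGraph_adj_add_one {n : ℕ} (i : Fin (n + 2)) :
    (cycleGraph (n + 2)).Adj i (i + 1) := by
  simp [cycleGraph_adj]

theorem cycleGraph_five_not_adj_add_two (i : Fin 5) : ¬ (cycleGraph 5).Adj i (i + 2) := by
  decide +revert

variable {V : Type*} {G : SimpleGraph V}

theorem isIndContained_pathGraph_of_pendant (f : cycleGraph 5 ↪g G) {v : V}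
    (hv : v ∉ Set.range f) (h0 : G.Adj v (f 0)) (h1 : ¬ G.Adj v (f 1))
    (h2 : ¬ G.Adj v (f 2)) (h3 : ¬ G.Adj v (f 3)) : pathGraph 5 ⊴ G := by
  have hvf : ∀ i, f i ≠ v := fun i h => hv ⟨i, h⟩
  let w : Fin 5 → V := ![v, f 0, f 1, f 2, f 3]
  have hw : Function.Injective w := by
    intro i j h
    fin_cases i <;> fin_cases j <;> simp_all [w]
  refine ⟨⟨⟨w, hw⟩, fun {i j} => ?_⟩⟩
  fin_cases i <;> fin_cases j <;> simp [w, G.adj_comm _ v, pathGraph_adj, *] <;> decide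

theorem isIndContained_compl_pathGraph_of_house (f : cycleGraph 5 ↪g G) {v : V}
    (hv : v ∉ Set.range f) (h0 : G.Adj v (f 0)) (h2 : G.Adj v (f 2))
    (h3 : G.Adj v (f 3)) (h4 : ¬ G.Adj v (f 4)) : (pathGraph 5)ᶜ ⊴ G := by
  have hvf : ∀ i, f i ≠ v := fun i h => hv ⟨i, h⟩
  let w : Fin 5 → V := ![v, f 4, f 2, f 0, f 3]
  have hw : Function.Injective w := by
    intro i j h
    fin_cases i <;> fin_cases j <;> simp_all [w]
  refine ⟨⟨⟨w, hw⟩, fun {i j} => ?_⟩⟩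
  fin_cases i <;> fin_cases j <;> simp [w, G.adj_comm _ v, pathGraph_adj, *] <;> decide

open Classical in
noncomputable def adjTrace {ι : Type*} [Fintype ι] (G : SimpleGraph V) (v : V) (y : ι → V) :
    Finset ι :=
  univ.filter fun i => G.Adj v (y i)

@[simp]
theorem mem_adjTrace {ι : Type*} [Fintype ι] {v : V} {y : ι → V} {i : ι} :
    i ∈ G.adjTrace v y ↔ G.Adj v (y i) := by
  simp [adjTrace]

end SimpleGraph

/-- The traces `G.adjTrace v f` that a vertex `v` outside an induced `C5` `f` can have in a
(P5, P5-bar)-free graph. -/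
def IsC5Trace (N : Finset (Fin 5)) : Prop :=
  N = ∅ ∨ N = univ ∨ ∃ a, ∀ i ≠ a, i ∈ N ↔ (cycleGraph 5).Adj a i

instance : DecidablePred IsC5Trace := fun _ => by unfold IsC5Trace; infer_instance

-- The hypotheses exclude an induced `P5` on `v, i, i+1, i+2, i+3` and a house on
-- `v, i, i+2, i+3, i+4`.
theorem IsC5Trace.of_forall {N : Finset (Fin 5)}
    (hP5 : ∀ i, i ∈ N → i + 1 ∉ N → i + 2 ∉ N → i + 3 ∈ N)
    (hP5c : ∀ i, i ∈ N → i + 2 ∈ N → i + 3 ∈ N → i + 4 ∈ N) : IsC5Trace N := by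
  decide +revert

theorem IsC5Trace.mem_of_forall_ne_mem {N : Finset (Fin 5)} (hN : IsC5Trace N) {k : Fin 5}
    (h : ∀ i ≠ k, i ∈ N) : k ∈ N := by
  decide +revert

theorem IsC5Trace.mem_iff_of_forall {N : Finset (Fin 5)} (hN : IsC5Trace N) {a j : Fin 5}
    (hja : j ≠ a) (h : ∀ i, i ≠ j → i ≠ a → (i ∈ N ↔ (cycleGraph 5).Adj a i)) :
    j ∈ N ↔ (cycleGraph 5).Adj a j := by
  decide +revert

theorem P5P5barFree.isC5Trace {V : Type*} {G : SimpleGraph V} (hG : P5P5barFree G)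
    (f : cycleGraph 5 ↪g G) {v : V} (hv : v ∉ Set.range f) : IsC5Trace (G.adjTrace v f) := by
  have hvr : ∀ i, v ∉ Set.range (f.comp (cycleGraph.rotate i).toEmbedding) := by
    rintro i ⟨j, rfl⟩
    exact hv ⟨_, rfl⟩
  refine IsC5Trace.of_forall (fun i h0 h1 h2 => ?_) (fun i h0 h2 h3 => ?_)
  · by_contra h3
    refine inducedFree_iff_not_isIndContained.1 hG.1
      (isIndContained_pathGraph_of_pendant _ (hvr i) ?_ ?_ ?_ ?_) <;> simp_all
  · by_contra h4
    refine inducedFree_iff_not_isIndContained.1 hG.2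
      (isIndContained_compl_pathGraph_of_house _ (hvr i) ?_ ?_ ?_ ?_) <;> simp_all

namespace IsBuoy

variable {V : Type*} {G : SimpleGraph V} {B : Fin 5 → Set V}

theorem adj_iff (hB : IsBuoy G B) {i j : Fin 5} (hij : i ≠ j) {x y : V} (hx : x ∈ B i)
    (hy : y ∈ B j) : G.Adj x y ↔ (cycleGraph 5).Adj i j := by
  have h5 : ∀ i j : Fin 5, i ≠ j → j = i + 1 ∨ i = j + 1 ∨ j = i + 2 ∨ i = j + 2 := by decide
  rcases h5 i j hij with rfl | rfl | rfl | rfl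
  · exact iff_of_true (hB.adj_next i x hx y hy) (cycleGraph_adj_add_one i)
  · exact iff_of_true (hB.adj_next j y hy x hx).symm (cycleGraph_adj_add_one j).symm
  · exact iff_of_false (hB.not_adj_skip i x hx y hy) (cycleGraph_five_not_adj_add_two i)
  · exact iff_of_false (fun h => hB.not_adj_skip j y hy x hx h.symm)
      (fun h => cycleGraph_five_not_adj_add_two j h.symm)

theorem of_adj_iff (hne : ∀ i, (B i).Nonempty) (hdisj : ∀ i j, i ≠ j → Disjoint (B i) (B j))
    (hadj : ∀ i j, i ≠ j → ∀ x ∈ B i, ∀ y ∈ B j, G.Adj x y ↔ (cycleGraph 5).Adj i j) :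
    IsBuoy G B where
  nonempty := hne
  disjoint := hdisj
  adj_next i x hx y hy := (hadj i (i + 1) (by simp) x hx y hy).2 (cycleGraph_adj_add_one i)
  not_adj_skip i x hx y hy :=
    mt (hadj i (i + 2) (by simp) x hx y hy).1 (cycleGraph_five_not_adj_add_two i)

theorem singleton (f : cycleGraph 5 ↪g G) : IsBuoy G fun i => {f i} :=
  of_adj_iff (fun _ => Set.singleton_nonempty _)
    (fun _ _ hij => Set.disjoint_singleton.2 (f.injective.ne hij))
    (by rintro i j - x rfl y rfl; exact f.map_adj_iff)

def transversal (hB : IsBuoy G B) {y : Fin 5 → V} (hy : y ∈ Set.univ.pi B) :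
    cycleGraph 5 ↪g G where
  toFun := y
  inj' i j h := by_contra fun hij => Set.disjoint_left.1 (hB.disjoint i j hij) (hy i trivial)
    (h ▸ hy j trivial)
  map_rel_iff' {i j} := by
    rcases eq_or_ne i j with rfl | hij
    · simp
    · exact hB.adj_iff hij (hy i trivial) (hy j trivial)

theorem isC5Trace (hG : P5P5barFree G) (hB : IsBuoy G B) {v : V} (hv : v ∉ ⋃ i, B i)
    {y : Fin 5 → V} (hy : y ∈ Set.univ.pi B) : IsC5Trace (G.adjTrace v y) :=
  hG.isC5Trace (hB.transversal hy) fun ⟨i, hi⟩ => hv (Set.mem_iUnion.2 ⟨i, hi ▸ hy i trivial⟩)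

theorem update_insert (hB : IsBuoy G B) {v : V} (hv : v ∉ ⋃ i, B i) {a : Fin 5}
    (hva : ∀ j ≠ a, ∀ z ∈ B j, G.Adj v z ↔ (cycleGraph 5).Adj a j) :
    IsBuoy G (Function.update B a (insert v (B a))) := by
  have hvB : ∀ i, v ∉ B i := fun i h => hv (Set.mem_iUnion.2 ⟨i, h⟩)
  refine of_adj_iff (fun i => (hB.nonempty i).mono fun x hx => ?_)
    (fun i j hij => Set.disjoint_left.2 fun x hi hj => ?_) (fun i j hij x hx y hy => ?_)
  · exact Set.mem_update_insert_iff.2 (Or.inl hx)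
  · rw [Set.mem_update_insert_iff] at hi hj
    rcases hi with hi | ⟨rfl, rfl⟩
    · rcases hj with hj | ⟨rfl, rfl⟩
      · exact Set.disjoint_left.1 (hB.disjoint i j hij) hi hj
      · exact hvB i hi
    · exact hvB j (hj.resolve_right fun h => hij h.1.symm)
  · rw [Set.mem_update_insert_iff] at hx hy
    rcases hx with hx | ⟨rfl, rfl⟩ <;> rcases hy with hy | ⟨rfl, rfl⟩
    · exact hB.adj_iff hij hx hy
    · rw [G.adj_comm, (cycleGraph 5).adj_comm]
      exact hva i hij x hx
    · exact hva j hij.symm y hy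
    · exact absurd rfl hij

theorem exists_forall_adj_iff (hG : P5P5barFree G) (hB : IsBuoy G B) {v : V}
    (hv : v ∉ ⋃ i, B i) {p q : V} (hp : p ∈ ⋃ i, B i) (hq : q ∈ ⋃ i, B i)
    (hvp : G.Adj v p) (hvq : ¬ G.Adj v q) :
    ∃ a, ∀ j ≠ a, ∀ z ∈ B j, G.Adj v z ↔ (cycleGraph 5).Adj a j := by
  classical
  obtain ⟨i, hpi⟩ := Set.mem_iUnion.1 hp
  obtain ⟨k, hqk⟩ := Set.mem_iUnion.1 hq
  obtain ⟨r, hr⟩ := Set.univ_pi_nonempty_iff.2 hB.nonempty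
  have hupd {y : Fin 5 → V} (hy : y ∈ Set.univ.pi B) {j : Fin 5} {z : V} (hz : z ∈ B j) :
      Function.update y j z ∈ Set.univ.pi B :=
    (Set.update_mem_pi_iff_of_mem hy).2 fun _ => hz
  set y := Function.update r i p
  have hy : y ∈ Set.univ.pi B := hupd hr hpi
  rcases hB.isC5Trace hG hv hy with hN | hN | ⟨a, ha⟩
  · have : i ∈ G.adjTrace v y := by simpa [y] using hvp
    simp [hN] at this
  · have := (hB.isC5Trace hG hv (hupd hy hqk)).mem_of_forall_ne_mem (k := k) fun l hl => by
      rw [mem_adjTrace, Function.update_of_ne hl, ← mem_adjTrace, hN]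
      exact mem_univ l
    exact (hvq (by simpa using this)).elim
  · refine ⟨a, fun j hja z hz => ?_⟩
    have := (hB.isC5Trace hG hv (hupd hy hz)).mem_iff_of_forall hja fun l hlj hla => by
      simpa [Function.update_of_ne hlj] using ha l hla
    simpa using this

theorem exists_insert_of_not_isModule (hG : P5P5barFree G) (hB : IsBuoy G B)
    (h : ¬ IsModule G (⋃ i, B i)) : ∃ v ∉ ⋃ i, B i, ∃ B' : Fin 5 → Set V,
      IsBuoy G B' ∧ (∀ i, B i ⊆ B' i) ∧ ⋃ i, B' i = insert v (⋃ i, B i) := by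
  classical
  simp only [IsModule, not_forall, not_or, exists_prop, not_not] at h
  obtain ⟨v, hv, ⟨q, hq, hvq⟩, p, hp, hvp⟩ := h
  obtain ⟨a, ha⟩ := hB.exists_forall_adj_iff hG hv hp hq hvp hvq
  exact ⟨v, hv, _, hB.update_insert hv ha, fun i x hx => Set.mem_update_insert_iff.2 (Or.inl hx),
    Set.iUnion_update_insert B a v⟩

end IsBuoy

/-- In a (P5, P5-bar)-free graph, every induced 5-cycle is contained in a buoy
which is either full or whose vertex set is a module. -/
theorem C5_in_full_or_module_buoy {V : Type*} [Fintype V]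
    (G : SimpleGraph V) (hfree : P5P5barFree G)
    (s : Set V) (hs : Nonempty ((G.induce s) ≃g cycleGraph 5)) :
    ∃ B : Fin 5 → Set V, IsBuoy G B ∧ s ⊆ (⋃ i, B i) ∧
      ((⋃ i, B i) = Set.univ ∨ IsModule G (⋃ i, B i)) := by
  obtain ⟨e⟩ := hs
  let f : cycleGraph 5 ↪g G := (Embedding.induce s).comp e.symm.toEmbedding
  have hsf : s ⊆ ⋃ i, {f i} := fun x hx => Set.mem_iUnion.2 ⟨e ⟨x, hx⟩, by simp [f]⟩
  have : Nonempty {B : Fin 5 → Set V // IsBuoy G B ∧ s ⊆ ⋃ i, B i} :=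
    ⟨⟨_, IsBuoy.singleton f, hsf⟩⟩
  obtain ⟨⟨B, hB, hsB⟩, hmax⟩ :=
    Finite.exists_max fun B : {B : Fin 5 → Set V // IsBuoy G B ∧ s ⊆ ⋃ i, B i} =>
      (⋃ i, B.1 i).ncard
  refine ⟨B, hB, hsB, Or.inr (by_contra fun hmod => ?_)⟩
  obtain ⟨v, hv, B', hB', hBB', hunion⟩ := hB.exists_insert_of_not_isModule hfree hmod
  have hle : (insert v (⋃ i, B i)).ncard ≤ (⋃ i, B i).ncard :=
    hunion ▸ hmax ⟨B', hB', hsB.trans (Set.iUnion_mono hBB')⟩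
  rw [Set.ncard_insert_of_notMem hv] at hle
  omega
end

section
/- Let G be a k-critical graph, let M be a module of G (M is allowed to be trivial), and let ℓ be the chromatic number of the subgraph induced by M. Let G' be the graph obtained from G by substituting a complete graph on ℓ vertices for M. Then G' is k-critical. -/
open SimpleGraph

/-!
A coloring of (an induced subgraph of) `G` uses at least `χ(G[M]) = ℓ` distinct colors on `M`,
and since `M` is a module, an outside vertex adjacent to the clique avoids all of them; giving the
clique vertices distinct colors among these extends the coloring to `G'`. Conversely, an
`ℓ`-coloring of `G[M]` maps `G` homomorphically into `G'`, so `χ(G') = χ(G) = k`. A proper induced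
subgraph of `G'` misses an outside vertex `x`, and is colored from a `(k-1)`-coloring of `G - x`,
or a clique vertex, and is then colored from a `(k-1)`-coloring of `G - m` for some `m ∈ M`:
there are fewer than `ℓ` clique vertices left, while `G[M - m]` still needs at least `ℓ - 1`
colors.
-/

namespace SimpleGraph

variable {V W α : Type*} {G : SimpleGraph V}

lemma Coloring.chromaticNumber_le_card_range [Finite α] (c : G.Coloring α) :
    G.chromaticNumber ≤ Nat.card (Set.range c) := by
  have := Fintype.ofFinite (Set.range c)
  let c' : G.Coloring (Set.range c) :=
    Coloring.mk (fun v => ⟨c v, v, rfl⟩) fun h e => c.valid h (congrArg Subtype.val e)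
  rw [Nat.card_eq_fintype_card]
  exact c'.colorable.chromaticNumber_le

lemma Coloring.exists_embedding_range [Finite α] [Finite W] (c : G.Coloring α)
    (hW : (Nat.card W : ℕ∞) ≤ G.chromaticNumber) : ∃ f : W ↪ α, ∀ w, f w ∈ Set.range c := by
  have := Fintype.ofFinite W
  have := Fintype.ofFinite (Set.range c)
  have hcard : Fintype.card W ≤ Fintype.card (Set.range c) := by
    simpa only [Nat.card_eq_fintype_card, Nat.cast_le] using
      hW.trans c.chromaticNumber_le_card_range
  obtain ⟨f⟩ := Function.Embedding.nonempty_of_card_le hcard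
  exact ⟨f.trans (Function.Embedding.subtype _), fun w => (f w).2⟩

lemma colorable_induce_of_colorable_induce_diff_singleton {M : Set V} {n : ℕ} (a : V)
    (h : (G.induce (M \ {a})).Colorable n) : (G.induce M).Colorable (n + 1) := by
  classical
  obtain ⟨d⟩ := h
  refine ⟨Coloring.mk (fun x => if hx : x.1 = a then Fin.last n
      else (d ⟨x.1, x.2, hx⟩).castSucc) ?_⟩
  rintro ⟨x, hx⟩ ⟨y, hy⟩ (hxy : G.Adj x y)
  dsimp only
  split_ifs with hxa hya hya
  · exact (G.irrefl (hxa ▸ hya ▸ hxy)).elim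
  · exact (Fin.castSucc_lt_last _).ne'
  · exact (Fin.castSucc_lt_last _).ne
  · exact fun e => d.valid (show (G.induce (M \ {a})).Adj ⟨x, hx, hxa⟩ ⟨y, hy, hya⟩ from hxy)
      (Fin.castSucc_injective _ e)

open Classical in
noncomputable def Coloring.substituteHom {M : Set V} (d : (G.induce M).Coloring W) :
    G →g substitute G M (⊤ : SimpleGraph W) where
  toFun v := if hv : v ∈ M then Sum.inr (d ⟨v, hv⟩) else Sum.inl ⟨v, hv⟩
  map_rel' {v w} hvw := by
    split_ifs with hv hw hw
    · exact d.valid (show (G.induce M).Adj ⟨v, hv⟩ ⟨w, hw⟩ from hvw)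
    · exact ⟨v, hv, hvw.symm⟩
    · exact ⟨w, hw, hvw⟩
    · exact hvw

end SimpleGraph

section Module

variable {V W : Type*} {G : SimpleGraph V} {M : Set V}

lemma IsModule.adj_of_adj (hM : IsModule G M) {v m m' : V} (hv : v ∉ M) (hm : m ∈ M)
    (hm' : m' ∈ M) (h : G.Adj v m) : G.Adj v m' :=
  (hM v hv).resolve_right (fun h' => h' m hm h) m' hm'

theorem IsModule.colorable_induce_substitute_top [Finite W] (hM : IsModule G M) {n : ℕ}
    {t : Set V} {s : Set ({v : V // v ∉ M} ⊕ W)} (hst : ∀ v, Sum.inl v ∈ s → v.1 ∈ t)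
    (hG : (G.induce t).Colorable n)
    (hs : (Nat.card {w // Sum.inr w ∈ s} : ℕ∞) ≤ (G.induce (M ∩ t)).chromaticNumber) :
    ((substitute G M (⊤ : SimpleGraph W)).induce s).Colorable n := by
  obtain ⟨c⟩ := hG
  obtain ⟨f, hf⟩ := Coloring.exists_embedding_range
    (c.comp (G.induceHomOfLE (s := M ∩ t) Set.inter_subset_right).toHom) hs
  have outside_ne : ∀ v (hv : Sum.inl v ∈ s) w (hw : Sum.inr w ∈ s),
      (substitute G M (⊤ : SimpleGraph W)).Adj (Sum.inl v) (Sum.inr w) →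
      c ⟨v, hst v hv⟩ ≠ f ⟨w, hw⟩ := by
    rintro v hv w hw ⟨m, hm, hvm⟩
    obtain ⟨⟨m', hm', _⟩, hfw⟩ := hf ⟨w, hw⟩
    rw [← hfw]
    exact c.valid (hM.adj_of_adj v.2 hm hm' hvm)
  refine ⟨Coloring.mk (fun x => match x with
    | ⟨Sum.inl v, hv⟩ => c ⟨v, hst v hv⟩
    | ⟨Sum.inr w, hw⟩ => f ⟨w, hw⟩) ?_⟩
  rintro ⟨v | v, hv⟩ ⟨w | w, hw⟩ hvw
  · exact c.valid hvw
  · exact outside_ne v hv w hw hvw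
  · exact (outside_ne w hw v hv hvw.symm).symm
  · exact fun e => (hvw : v ≠ w) (Subtype.ext_iff.mp (f.injective e))

theorem IsModule.colorable_substitute_top [Finite W] (hM : IsModule G M) {n : ℕ}
    (hG : G.Colorable n) (hW : (Nat.card W : ℕ∞) ≤ (G.induce M).chromaticNumber) :
    (substitute G M (⊤ : SimpleGraph W)).Colorable n := by
  refine (hM.colorable_induce_substitute_top (s := Set.univ) (fun _ _ => Set.mem_univ _)
    (hG.of_hom (G.induceUnivIso).toHom) ?_).of_hom (induceUnivIso _).symm.toHom
  rw [Set.inter_univ]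
  exact le_trans (by exact_mod_cast Finite.card_subtype_le _) hW

theorem IsModule.colorable_induce_substitute_top_of_inl_notMem [Finite W] (hM : IsModule G M)
    {n : ℕ} (hdel : ∀ v, (G.induce {v}ᶜ).Colorable n)
    (hW : (Nat.card W : ℕ∞) ≤ (G.induce M).chromaticNumber)
    {s : Set ({v : V // v ∉ M} ⊕ W)} {x : {v : V // v ∉ M}} (hx : Sum.inl x ∉ s) :
    ((substitute G M (⊤ : SimpleGraph W)).induce s).Colorable n := by
  refine hM.colorable_induce_substitute_top (t := {x.1}ᶜ)
    (fun v hv hvx => hx (Subtype.ext hvx ▸ hv)) (hdel x.1) ?_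
  rw [Set.inter_eq_left.mpr (Set.subset_compl_singleton_iff.mpr x.2)]
  exact le_trans (by exact_mod_cast Finite.card_subtype_le _) hW

theorem IsModule.colorable_induce_substitute_top_of_inr_notMem [Finite W] (hM : IsModule G M)
    {n : ℕ} (hdel : ∀ v, (G.induce {v}ᶜ).Colorable n)
    (hW : (Nat.card W : ℕ∞) ≤ (G.induce M).chromaticNumber)
    {s : Set ({v : V // v ∉ M} ⊕ W)} {w : W} (hw : Sum.inr w ∉ s) :
    ((substitute G M (⊤ : SimpleGraph W)).induce s).Colorable n := by
  have hsW : Nat.card {w // Sum.inr w ∈ s} < Nat.card W := Finite.card_subtype_lt hw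
  obtain ⟨⟨m, hm⟩⟩ : Nonempty M := by
    rw [← not_isEmpty_iff, ← chromaticNumber_eq_zero_iff]
    intro h
    rw [h, nonpos_iff_eq_zero, Nat.cast_eq_zero] at hW
    omega
  refine hM.colorable_induce_substitute_top (t := {m}ᶜ)
    (fun v _ hvm => v.2 (hvm ▸ hm)) (hdel m) ?_
  rw [← Set.sdiff_eq, le_chromaticNumber_iff_colorable]
  intro N hN
  have hWN : (Nat.card W : ℕ∞) ≤ (N + 1 : ℕ) :=
    hW.trans (colorable_induce_of_colorable_induce_diff_singleton m hN).chromaticNumber_le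
  norm_cast at hWN ⊢
  omega

end Module

theorem substitute_clique_critical_general {V : Type*}
    (G : SimpleGraph V) (k : ℕ) (hG : IsKCritical G k)
    (M : Set V) (hM : IsModule G M) (ℓ : ℕ)
    (hℓ : (G.induce M).chromaticNumber = ℓ) :
    IsKCritical (substitute G M (⊤ : SimpleGraph (Fin ℓ))) k := by
  obtain ⟨hχ, hcrit⟩ := hG
  have hW : (Nat.card (Fin ℓ) : ℕ∞) ≤ (G.induce M).chromaticNumber := by simp [hℓ]
  have hdel (v : V) : (G.induce {v}ᶜ).Colorable (k - 1) :=
    hcrit _ (Set.compl_ne_univ.mpr (Set.singleton_nonempty v))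
  refine ⟨le_antisymm ?_ ?_, fun s hs => ?_⟩
  · exact (hM.colorable_substitute_top (chromaticNumber_le_iff_colorable.mp hχ.le)
      hW).chromaticNumber_le
  · exact hχ ▸ chromaticNumber_mono_of_hom
      (chromaticNumber_le_iff_colorable.mp hℓ.le).some.substituteHom
  · obtain ⟨x | w, hx⟩ := (Set.ne_univ_iff_exists_notMem s).mp hs
    · exact hM.colorable_induce_substitute_top_of_inl_notMem hdel hW hx
    · exact hM.colorable_induce_substitute_top_of_inr_notMem hdel hW hx

/-- Substituting a clique on `χ(M)` vertices for a module `M` of a `k`-critical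
graph yields a `k`-critical graph. -/
theorem substitute_clique_critical {V : Type*} [Fintype V]
    (G : SimpleGraph V) (k : ℕ) (hk : 1 ≤ k) (hG : IsKCritical G k)
    (M : Set V) (hM : IsModule G M) (ℓ : ℕ)
    (hℓ : (G.induce M).chromaticNumber = ℓ) :
    IsKCritical (substitute G M (⊤ : SimpleGraph (Fin ℓ))) k :=
  substitute_clique_critical_general G k hG M hM ℓ hℓ
end
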